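/- arXiv:2405.08490 — 8 statements merged into one kernel-verified Lean document; each statement's English description precedes it below -/
import Mathlib

section
/- For numerical semigroups A, B and d ∈ ℤ, one has Z_d(B,A) = ⋂_{b ∈ B, b+d ∈ A} Z_{−b}(B,A). -/
/-- A numerical semigroup: an additive submonoid of `ℕ` with finite complement. -/
def IsNumericalSemigroup (A : AddSubmonoid ℕ) : Prop :=
  ((A : Set ℕ)ᶜ).Finite

/-- `Zset d B A = {i ∈ B | i + d ∉ A}`, viewing `A, B ⊆ ℕ ⊆ ℤ`. -/
def Zset (d : ℤ) (B A : AddSubmonoid ℕ) : Set ℕ :=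
  {i : ℕ | i ∈ B ∧ ¬ ∃ a ∈ A, (i : ℤ) + d = (a : ℤ)}

theorem Zset_eq_iInter (A B : AddSubmonoid ℕ)
    (hA : IsNumericalSemigroup A) (hB : IsNumericalSemigroup B) (d : ℤ) :
    Zset d B A =
      ⋂ b ∈ {b : ℕ | b ∈ B ∧ ∃ a ∈ A, (b : ℤ) + d = (a : ℤ)},
        Zset (-(b : ℤ)) B A := by
  obtain ⟨n, hn⟩ := (hA.union hB).bddAbove
  have hmem : ∀ m : ℕ, n < m → m ∈ A ∧ m ∈ B := by
    intro m hm
    by_contra h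
    push_neg at h
    have hmm : m ∈ ((A : Set ℕ)ᶜ ∪ (B : Set ℕ)ᶜ) := by
      by_cases hA' : m ∈ A
      · exact Or.inr (h hA')
      · exact Or.inl hA'
    exact absurd (hn hmm) (not_le.mpr hm)
  set b0 : ℕ := n + 1 + d.natAbs with hb0
  have hb0B : b0 ∈ B := (hmem b0 (by omega)).2
  have hnonneg : (0 : ℤ) ≤ (b0 : ℤ) + d := by
    have h1 : -(d.natAbs : ℤ) ≤ d := by omega
    have : (b0 : ℤ) = (n : ℤ) + 1 + (d.natAbs : ℤ) := by push_cast [hb0]; ring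
    omega
  set a0 : ℕ := ((b0 : ℤ) + d).toNat with ha0
  have ha0eq : (b0 : ℤ) + d = (a0 : ℤ) := by rw [ha0, Int.toNat_of_nonneg hnonneg]
  have ha0A : a0 ∈ A := by
    refine (hmem a0 ?_).1
    have h1 : -(d.natAbs : ℤ) ≤ d := by omega
    have : (b0 : ℤ) = (n : ℤ) + 1 + (d.natAbs : ℤ) := by push_cast [hb0]; ring
    omega
  ext i
  simp only [Zset, Set.mem_iInter, Set.mem_setOf_eq]
  constructor
  · rintro ⟨hiB, hno⟩ b ⟨hbB, a, haA, hba⟩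
    refine ⟨hiB, ?_⟩
    rintro ⟨a', ha'A, heq⟩
    exact hno ⟨a' + a, A.add_mem ha'A haA, by push_cast; omega⟩
  · intro h
    have key := h b0 ⟨hb0B, a0, ha0A, ha0eq⟩
    refine ⟨key.1, ?_⟩
    rintro ⟨a, haA, heq⟩
    have key2 := h i ⟨key.1, a, haA, heq⟩
    exact key2.2 ⟨0, A.zero_mem, by push_cast; omega⟩
end

section
/- Let A be a numerical semigroup. For all a, b ∈ A, the Apéry set Z_{−a−b}(A) decomposes as the disjoint union Z_{−a}(A) ⊔ (a + Z_{−b}(A)). -/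
theorem apery_decomposition (A : AddSubmonoid ℕ) (hA : IsNumericalSemigroup A)
    (a b : ℕ) (ha : a ∈ A) (hb : b ∈ A) :
    Zset (-((a : ℤ) + (b : ℤ))) A A =
        Zset (-(a : ℤ)) A A ∪ (fun j => a + j) '' Zset (-(b : ℤ)) A A ∧
      Disjoint (Zset (-(a : ℤ)) A A) ((fun j => a + j) '' Zset (-(b : ℤ)) A A) := by
  constructor
  · ext i
    simp only [Zset, Set.mem_setOf_eq, Set.mem_union, Set.mem_image]
    constructor
    · rintro ⟨hi, hni⟩
      by_cases h : ∃ c ∈ A, (i:ℤ) + -(a:ℤ) = (c:ℤ)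
      · obtain ⟨c, hc, hcEq⟩ := h
        right
        refine ⟨c, ⟨hc, ?_⟩, ?_⟩
        · rintro ⟨e, he, heEq⟩
          exact hni ⟨e, he, by omega⟩
        · omega
      · exact Or.inl ⟨hi, h⟩
    · rintro (⟨hi, hni⟩ | ⟨j, ⟨hj, hnj⟩, rfl⟩)
      · refine ⟨hi, ?_⟩
        rintro ⟨c, hc, hcEq⟩
        exact hni ⟨c + b, A.add_mem hc hb, by push_cast; omega⟩
      · refine ⟨A.add_mem ha hj, ?_⟩
        rintro ⟨c, hc, hcEq⟩
        exact hnj ⟨c, hc, by push_cast at hcEq ⊢; omega⟩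
  · rw [Set.disjoint_left]
    rintro i ⟨hi, hni⟩ ⟨j, ⟨hj, hnj⟩, rfl⟩
    exact hni ⟨j, hj, by push_cast; omega⟩
end

section
/- Every numerical semigroup generated by two coprime natural numbers a₁, a₂ ≥ 2 is symmetric: for all z ∈ ℕ not in the semigroup ⟨a₁, a₂⟩ = {m·a₁ + n·a₂ | m, n ∈ ℕ}, the element F − z lies in ⟨a₁, a₂⟩, where F = a₁a₂ − a₁ − a₂ is the Frobenius number. -/
theorem two_generated_numerical_semigroup_symmetric
    (a₁ a₂ : ℕ) (h1 : 2 ≤ a₁) (h2 : 2 ≤ a₂) (hco : Nat.Coprime a₁ a₂)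
    (z : ℕ) (hz : ¬ ∃ m n : ℕ, z = m * a₁ + n * a₂)
    (hzF : (z : ℤ) ≤ (a₁ : ℤ) * a₂ - a₁ - a₂) :
    ∃ m n : ℕ, ((a₁ : ℤ) * a₂ - a₁ - a₂) - z = (m : ℤ) * a₁ + (n : ℤ) * a₂ := by
  haveI : NeZero a₂ := ⟨by omega⟩
  have hunit : IsUnit (a₁ : ZMod a₂) := (ZMod.isUnit_iff_coprime a₁ a₂).mpr hco
  set m : ℕ := ((z : ZMod a₂) * ((hunit.unit⁻¹ : (ZMod a₂)ˣ) : ZMod a₂)).val with hm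
  have hmlt : m < a₂ := ZMod.val_lt _
  have hcong : ((m * a₁ : ℕ) : ZMod a₂) = ((z : ℕ) : ZMod a₂) := by
    push_cast
    rw [hm, ZMod.natCast_val, ZMod.cast_id, mul_assoc]
    have h5 : ((hunit.unit⁻¹ : (ZMod a₂)ˣ) : ZMod a₂) * (a₁ : ZMod a₂) = 1 := by
      simpa [IsUnit.unit_spec] using hunit.unit.inv_mul
    rw [h5, mul_one]
  have hmod : m * a₁ ≡ z [MOD a₂] := (ZMod.natCast_eq_natCast_iff _ _ _).mp hcong
  have hdvd : (a₂ : ℤ) ∣ (z : ℤ) - (m : ℤ) * a₁ := by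
    have := hmod.dvd
    push_cast at this ⊢
    exact this
  obtain ⟨k, hk⟩ := hdvd
  -- if k ≥ 0 we'd have z in the semigroup
  have hkneg : k < 0 := by
    by_contra hknn
    push_neg at hknn
    apply hz
    refine ⟨m, k.toNat, ?_⟩
    have : (z : ℤ) = (m : ℤ) * a₁ + (k.toNat : ℤ) * a₂ := by
      rw [Int.toNat_of_nonneg hknn]; linarith [hk]
    exact_mod_cast this
  refine ⟨a₂ - 1 - m, (-1 - k).toNat, ?_⟩
  have hM : ((a₂ - 1 - m : ℕ) : ℤ) = (a₂ : ℤ) - 1 - m := by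
    have : m ≤ a₂ - 1 := by omega
    push_cast [Nat.sub_sub]
    omega
  have hN : (((-1 - k).toNat : ℤ)) = -1 - k := Int.toNat_of_nonneg (by omega)
  rw [hM, hN]
  have hz' : (z : ℤ) = (m : ℤ) * a₁ + (a₂ : ℤ) * k := by linarith [hk]
  rw [hz']
  ring
end

section
/- Let k be a field and A an A-module M with a right A-submodule R ⊆ Hom_A(M,A) (A commutative). If for each m ∈ M there exists φ ∈ hom^R_A(M,M) (maps of the form x ↦ Σ r_i(x) m_i with r_i ∈ R, m_i ∈ M) with φ(m) = m, then for every finite list n₁,…,n_l ∈ M there exists π ∈ hom^R_A(M,M) with π(n_j) = n_j for all j. -/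
theorem locally_projective_induction
    (A : Type*) [CommRing A] (M : Type*) [AddCommGroup M] [Module A M]
    (R : Set (M →ₗ[A] A))
    (h : ∀ m : M, ∃ (n : ℕ) (r : Fin n → (M →ₗ[A] A)) (v : Fin n → M),
      (∀ i, r i ∈ R) ∧ (∑ i, r i m • v i) = m) :
    ∀ (l : ℕ) (x : Fin l → M),
      ∃ (n : ℕ) (r : Fin n → (M →ₗ[A] A)) (v : Fin n → M),
        (∀ i, r i ∈ R) ∧ ∀ j, (∑ i, r i (x j) • v i) = x j := by
  set T : Set (M →ₗ[A] M) := {f | ∃ r ∈ R, ∃ v : M, f = LinearMap.smulRight r v} with hT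
  -- sums of elementary maps lie in span
  have hsum_mem : ∀ (n : ℕ) (r : Fin n → (M →ₗ[A] A)) (v : Fin n → M),
      (∀ i, r i ∈ R) → (∑ i, LinearMap.smulRight (r i) (v i)) ∈ Submodule.span A T := by
    intro n r v hr
    exact Submodule.sum_mem _ fun i _ => Submodule.subset_span ⟨r i, hr i, v i, rfl⟩
  -- span is closed under left composition with any linear map
  have hcomp : ∀ (α β : M →ₗ[A] M), β ∈ Submodule.span A T →
      α ∘ₗ β ∈ Submodule.span A T := by
    intro α β hβ
    induction hβ using Submodule.span_induction with
    | mem f hf =>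
        obtain ⟨s, hs, w, rfl⟩ := hf
        exact Submodule.subset_span ⟨s, hs, α w, by ext m; simp⟩
    | zero => simpa using Submodule.zero_mem (Submodule.span A T)
    | add f g _ _ hf hg =>
        have : α ∘ₗ (f + g) = α ∘ₗ f + α ∘ₗ g := by ext m; simp
        rw [this]; exact Submodule.add_mem _ hf hg
    | smul a f _ hf =>
        have : α ∘ₗ (a • f) = a • (α ∘ₗ f) := by ext m; simp
        rw [this]; exact Submodule.smul_mem _ _ hf
  -- every element of span has a sum representation
  have hrep : ∀ f ∈ Submodule.span A T, ∃ (n : ℕ) (r : Fin n → (M →ₗ[A] A)) (v : Fin n → M),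
      (∀ i, r i ∈ R) ∧ f = ∑ i, LinearMap.smulRight (r i) (v i) := by
    intro f hf
    induction hf using Submodule.span_induction with
    | mem f hf =>
        obtain ⟨s, hs, w, rfl⟩ := hf
        exact ⟨1, fun _ => s, fun _ => w, fun _ => hs, by simp⟩
    | zero => exact ⟨0, Fin.elim0, Fin.elim0, fun i => i.elim0, by simp⟩
    | add f g _ _ hf hg =>
        obtain ⟨n1, r1, v1, hr1, rfl⟩ := hf
        obtain ⟨n2, r2, v2, hr2, rfl⟩ := hg
        refine ⟨n1 + n2, Fin.addCases r1 r2, Fin.addCases v1 v2, ?_, ?_⟩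
        · intro i
          refine Fin.addCases (fun i => ?_) (fun i => ?_) i <;> simp [hr1, hr2]
        · rw [Fin.sum_univ_add]; simp
    | smul a f _ hf =>
        obtain ⟨n, r, v, hr, rfl⟩ := hf
        refine ⟨n, r, fun i => a • v i, hr, ?_⟩
        rw [Finset.smul_sum]
        refine Finset.sum_congr rfl fun i _ => ?_
        ext m
        simp only [LinearMap.smul_apply, LinearMap.smulRight_apply]
        exact smul_comm _ _ _
  -- main induction
  have main : ∀ (l : ℕ) (x : Fin l → M),
      ∃ π ∈ Submodule.span A T, ∀ j, π (x j) = x j := by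
    intro l
    induction l with
    | zero => exact fun x => ⟨0, Submodule.zero_mem _, fun j => j.elim0⟩
    | succ l ih =>
        intro x
        obtain ⟨β, hβ, hβfix⟩ := ih (fun j => x j.castSucc)
        obtain ⟨n, r, v, hr, hα⟩ := h (x (Fin.last l) - β (x (Fin.last l)))
        set α : M →ₗ[A] M := ∑ i, LinearMap.smulRight (r i) (v i) with hαdef
        have hαmem : α ∈ Submodule.span A T := hsum_mem n r v hr
        have hαval : α (x (Fin.last l) - β (x (Fin.last l)))
            = x (Fin.last l) - β (x (Fin.last l)) := by
          rw [hαdef]; simpa using hα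
        refine ⟨β + α - α ∘ₗ β,
          Submodule.sub_mem _ (Submodule.add_mem _ hβ hαmem) (hcomp α β hβ), ?_⟩
        intro j
        refine Fin.lastCases ?_ (fun j => ?_) j
        · have := hαval
          rw [map_sub] at this
          simp only [LinearMap.sub_apply, LinearMap.add_apply, LinearMap.comp_apply]
          have h2 : α (x (Fin.last l)) - α (β (x (Fin.last l)))
              = x (Fin.last l) - β (x (Fin.last l)) := this
          rw [show β (x (Fin.last l)) + α (x (Fin.last l)) - α (β (x (Fin.last l)))
              = β (x (Fin.last l)) + (α (x (Fin.last l)) - α (β (x (Fin.last l)))) from by abel,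
            h2]
          abel
        · have hb : β (x j.castSucc) = x j.castSucc := hβfix j
          simp [LinearMap.sub_apply, LinearMap.add_apply, LinearMap.comp_apply, hb]
  intro l x
  obtain ⟨π, hπ, hfix⟩ := main l x
  obtain ⟨n, r, v, hr, rfl⟩ := hrep π hπ
  refine ⟨n, r, v, hr, fun j => ?_⟩
  have := hfix j
  simpa using this
end

section
/- Let k be a field. Suppose M is an A-module which is the colimit of duals P_λ* of a directed system of quotients P_λ = P/I_λ of a right A-module P, with each P_λ finitely generated projective over A. Then M is strongly R-locally projective, where R is the image of the canonical map ν : P → M*. -/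
/-- Dual basis for a finitely generated projective module. -/
lemma exists_dual_basis (A : Type*) [CommRing A] (Q : Type*) [AddCommGroup Q] [Module A Q]
    [Module.Finite A Q] [Module.Projective A Q] :
    ∃ (n : ℕ) (f : Fin n → Module.Dual A Q) (q : Fin n → Q),
      ∀ y : Q, (∑ i, f i y • q i) = y := by
  obtain ⟨n, g, hg⟩ := Module.Finite.exists_fin' A Q
  obtain ⟨h, hh⟩ := Module.projective_lifting_property g LinearMap.id hg
  refine ⟨n, fun i => (LinearMap.proj i).comp h, fun i => g (Pi.single i 1), fun y => ?_⟩
  have hy : y = g (h y) := by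
    conv_lhs => rw [← LinearMap.id_apply (R := A) y, ← hh]
    rfl
  conv_rhs => rw [hy]
  rw [pi_eq_sum_univ (h y), map_sum]
  refine Finset.sum_congr rfl fun i _ => ?_
  simp only [LinearMap.proj, LinearMap.comp_apply, LinearMap.coe_mk, AddHom.coe_mk,
    Function.eval, map_smul]
  congr 2
  ext j
  simp [Pi.single_apply, eq_comm]

theorem strongly_locally_projective_of_colim_of_duals
    (A : Type*) [CommRing A] (P : Type*) [AddCommGroup P] [Module A P]
    (Λ : Type*) [Preorder Λ] [IsDirected Λ (· ≤ ·)] [Nonempty Λ]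
    (I : Λ → Submodule A P) (hI : Antitone I)
    (hfin : ∀ l : Λ, Module.Finite A (P ⧸ I l))
    (hproj : ∀ l : Λ, Module.Projective A (P ⧸ I l))
    (M : Submodule A (Module.Dual A P))
    (hM : (M : Set (Module.Dual A P)) =
      ⋃ l : Λ, ((I l).dualAnnihilator : Set (Module.Dual A P)))
    (R : Set (Module.Dual A ↥M))
    (hR : R = {r | ∃ p : P, r = (Module.Dual.eval A P p).comp M.subtype}) :
    ∀ N : Submodule A ↥M, N.FG →
      ∃ (n : ℕ) (r : Fin n → Module.Dual A ↥M) (m : Fin n → ↥M),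
        (∀ i, r i ∈ R) ∧
        (∀ x : ↥M, (∑ i, r i (∑ j, r j x • m j) • m i) = ∑ j, r j x • m j) ∧
        (∀ x ∈ N, (∑ i, r i x • m i) = x) := by
  classical
  intro N hN
  obtain ⟨S, hS⟩ := hN
  -- every element of M kills some I l
  have hMmem : ∀ x : ↥M, ∃ l, (x : Module.Dual A P) ∈ (I l).dualAnnihilator := by
    intro x
    have hx : (x : Module.Dual A P) ∈ (M : Set (Module.Dual A P)) := x.2
    rw [hM, Set.mem_iUnion] at hx
    exact hx
  choose lof hlof using hMmem
  obtain ⟨l, hl⟩ := (S.image lof).exists_le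
  -- all generators of N kill I l
  have hSkill : ∀ s ∈ S, (s : Module.Dual A P) ∈ (I l).dualAnnihilator := by
    intro s hs
    have hle : I l ≤ I (lof s) := hI (hl _ (Finset.mem_image_of_mem lof hs))
    rw [Submodule.mem_dualAnnihilator]
    intro w hw
    exact (Submodule.mem_dualAnnihilator _).mp (hlof s) w (hle hw)
  haveI := hfin l
  haveI := hproj l
  obtain ⟨n, f, q, hfq⟩ := exists_dual_basis A (P ⧸ I l)
  choose p hp using fun i => Submodule.Quotient.mk_surjective (I l) (q i)
  have hann : ∀ i : Fin n, (f i) ∘ₗ (I l).mkQ ∈ (I l).dualAnnihilator := by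
    intro i
    rw [Submodule.mem_dualAnnihilator]
    intro w hw
    simp [(Submodule.Quotient.mk_eq_zero _).mpr hw]
  have hmem : ∀ i : Fin n, (f i) ∘ₗ (I l).mkQ ∈ M := by
    intro i
    rw [← SetLike.mem_coe, hM, Set.mem_iUnion]
    exact ⟨l, hann i⟩
  set m : Fin n → ↥M := fun i => ⟨(f i) ∘ₗ (I l).mkQ, hmem i⟩ with hm
  set r : Fin n → Module.Dual A ↥M :=
    fun i => (Module.Dual.eval A P (p i)).comp M.subtype with hr
  have key : ∀ x : ↥M, (x : Module.Dual A P) ∈ (I l).dualAnnihilator →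
      (∑ i, r i x • m i) = x := by
    intro x hx
    have hker : I l ≤ LinearMap.ker (x : Module.Dual A P) := fun w hw =>
      (Submodule.mem_dualAnnihilator _).mp hx w hw
    set ψ := (I l).liftQ (x : Module.Dual A P) hker with hψ
    have hxz : ∀ w : P, (x : Module.Dual A P) w = ψ ((I l).mkQ w) := fun w => rfl
    apply Subtype.ext
    rw [AddSubmonoidClass.coe_finset_sum]
    ext z
    simp only [hm, hr, Submodule.coe_smul, SetLike.mk_smul_mk, LinearMap.coe_sum,
      Finset.sum_apply, LinearMap.smul_apply, LinearMap.comp_apply, Module.Dual.eval_apply,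
      Submodule.coe_subtype, smul_eq_mul]
    calc ∑ i, (x : Module.Dual A P) (p i) * f i ((I l).mkQ z)
        = ∑ i, f i ((I l).mkQ z) • ψ (q i) := by
          refine Finset.sum_congr rfl fun i _ => ?_
          rw [hxz (p i), Submodule.mkQ_apply, hp i, smul_eq_mul, mul_comm]
      _ = ψ (∑ i, f i ((I l).mkQ z) • q i) := by rw [map_sum]; simp
      _ = (x : Module.Dual A P) z := by rw [hfq]; exact (hxz z).symm
  refine ⟨n, r, m, fun i => by rw [hR]; exact ⟨p i, rfl⟩, ?_, ?_⟩
  · intro x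
    apply key
    rw [AddSubmonoidClass.coe_finset_sum]
    refine Submodule.sum_mem _ fun j _ => ?_
    rw [Submodule.coe_smul]
    exact Submodule.smul_mem _ _ (hann j)
  · intro x hx
    apply key
    rw [← hS] at hx
    have : Submodule.span A (S : Set ↥M) ≤
        ((I l).dualAnnihilator).comap M.subtype := by
      rw [Submodule.span_le]
      intro s hs
      exact hSkill s hs
    exact this hx
end

section
/- Let k be a field of characteristic 0, K = k[t,t⁻¹] the Laurent polynomial algebra, and D₀ := t·(d/dt) ∈ End_k(K). The map Φ : k[x] # ℤ → 𝒟_K sending f # t^d to the operator t^a ↦ f(a)·t^{d+a} is an isomorphism of ℤ-graded k-algebras, where k[x] # ℤ is the crossed product with multiplication (f # t^d)(g # t^e) = σ^e(f)g # t^{d+e}, σ(x) = x+1, and 𝒟_K is the ring of k-linear differential operators on K. -/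
open Polynomial LaurentPolynomial

/-- `D` is a differential operator of order at most `n` on the commutative `k`-algebra `K`. -/
def IsDiffOp (k K : Type*) [CommSemiring k] [CommRing K] [Algebra k K] :
    ℕ → (K →ₗ[k] K) → Prop
  | 0, D => ∃ u : K, ∀ x, D x = u * x
  | n + 1, D => ∀ a : K,
      IsDiffOp k K n (D ∘ₗ LinearMap.mulLeft k a - LinearMap.mulLeft k a ∘ₗ D)

/-- The operator `f # t^d` on `K = k[t,t⁻¹]`, acting by `t^a ↦ f(a) • t^{d+a}`. -/
noncomputable def Phi (k : Type*) [Field k] (f : Polynomial k) (d : ℤ) :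
    LaurentPolynomial k →ₗ[k] LaurentPolynomial k :=
  (Finsupp.lsum k fun a : ℤ =>
    LinearMap.toSpanSingleton k (LaurentPolynomial k)
      (f.eval (a : k) • LaurentPolynomial.T (d + a))) ∘ₗ
    (AddMonoidAlgebra.coeffLinearEquiv k).toLinearMap

/-!
`Φ(f # t^d)` sends `t^a` to `f(a) t^{d+a}`, so composing two such operators realises the
crossed-product multiplication, and commuting `Φ(f # t^d)` with multiplication by `t^b` gives
`Φ((f(x + b) - f) # t^{d+b})`, which lowers the degree of `f`; hence `Φ(f # t^d)` is a
differential operator of order at most `deg f`. The coefficient of `t^{d+a}` in `Φ(F)(t^a)` is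
`F_d(a)`, and in characteristic zero a polynomial vanishing on `ℤ` is zero, so `Φ` is injective.
Conversely, if `D` has order `n + 1`, then `[D, t] = Φ(F)` by induction; solving
`H(x + 1) - H(x) = F_d` for each `d` gives `Φ(G)` with `[Φ(G), t] = [D, t]`, and an operator
commuting with `t` is multiplication by its value at `1`, so `D - Φ(G)` is a multiplication
operator, which lies in the image of `Φ`.
-/

-- gives `Module.End` the Lie-ring lemmas (`add_lie`, `sub_lie`, ...) for its commutator bracket
attribute [local instance] LieRing.ofAssociativeRing

theorem lie_mulLeft_mulLeft {R A : Type*} [CommSemiring R] [CommRing A] [Algebra R A] (a b : A) :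
    ⁅LinearMap.mulLeft R a, LinearMap.mulLeft R b⁆ = 0 := by
  rw [Ring.lie_def, Module.End.mul_eq_comp, Module.End.mul_eq_comp, ← LinearMap.mulLeft_mul,
    ← LinearMap.mulLeft_mul, mul_comm, sub_self]

namespace IsDiffOp

variable {k K : Type*} [CommSemiring k] [CommRing K] [Algebra k K]

theorem succ_iff {n : ℕ} {D : Module.End k K} :
    IsDiffOp k K (n + 1) D ↔ ∀ a : K, IsDiffOp k K n ⁅D, LinearMap.mulLeft k a⁆ :=
  Iff.rfl

theorem zero : ∀ n : ℕ, IsDiffOp k K n 0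
  | 0 => ⟨0, fun x => by simp⟩
  | n + 1 => succ_iff.mpr fun a => by rw [zero_lie]; exact zero n

theorem add : ∀ {n : ℕ} {D E : Module.End k K}, IsDiffOp k K n D → IsDiffOp k K n E →
    IsDiffOp k K n (D + E)
  | 0, _, _, ⟨u, hu⟩, ⟨v, hv⟩ => ⟨u + v, fun x => by simp [hu, hv, add_mul]⟩
  | _ + 1, _, _, hD, hE => succ_iff.mpr fun a => by rw [add_lie]; exact (hD a).add (hE a)

theorem smul (c : k) : ∀ {n : ℕ} {D : Module.End k K}, IsDiffOp k K n D →
    IsDiffOp k K n (c • D)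
  | 0, _, ⟨u, hu⟩ => ⟨c • u, fun x => by simp [hu]⟩
  | _ + 1, D, hD => succ_iff.mpr fun a => by
    rw [show ⁅c • D, LinearMap.mulLeft k a⁆ = c • ⁅D, LinearMap.mulLeft k a⁆ by
      simp only [Ring.lie_def, smul_mul_assoc, mul_smul_comm, smul_sub]]
    exact (hD a).smul c

theorem succ : ∀ {n : ℕ} {D : Module.End k K}, IsDiffOp k K n D → IsDiffOp k K (n + 1) D
  | 0, _, ⟨u, hu⟩ => fun a => ⟨0, fun x => by simp [hu, mul_left_comm]⟩
  | _ + 1, _, hD => fun a => (hD a).succ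

theorem mono {m n : ℕ} (h : m ≤ n) {D : Module.End k K} (hD : IsDiffOp k K m D) :
    IsDiffOp k K n D := by
  induction h with
  | refl => exact hD
  | step _ ih => exact ih.succ

theorem succ_of_span_eq_top {n : ℕ} {D : Module.End k K} {S : Set K}
    (hS : Submodule.span k S = ⊤) (h : ∀ a ∈ S, IsDiffOp k K n ⁅D, LinearMap.mulLeft k a⁆) :
    IsDiffOp k K (n + 1) D := by
  refine succ_iff.mpr fun a => ?_
  induction (hS ▸ Submodule.mem_top : a ∈ Submodule.span k S) using
    Submodule.span_induction with
  | mem x hx => exact h x hx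
  | zero => rw [LinearMap.mulLeft_zero_eq_zero, lie_zero]; exact zero n
  | add x y _ _ hx hy =>
    rw [show LinearMap.mulLeft k (x + y) = LinearMap.mulLeft k x + LinearMap.mulLeft k y from
        map_add (LinearMap.mul k K) x y, lie_add]
    exact hx.add hy
  | smul c x _ hx =>
    rw [show LinearMap.mulLeft k (c • x) = c • LinearMap.mulLeft k x from
        map_smul (LinearMap.mul k K) c x,
      show ⁅D, c • LinearMap.mulLeft k x⁆ = c • ⁅D, LinearMap.mulLeft k x⁆ by
        simp only [Ring.lie_def, smul_mul_assoc, mul_smul_comm, smul_sub]]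
    exact hx.smul c

end IsDiffOp

namespace LaurentPolynomial

section CommSemiring

variable {R : Type*} [CommSemiring R]

theorem span_range_T : Submodule.span R (Set.range (T : ℤ → R[T;T⁻¹])) = ⊤ := by
  refine Submodule.eq_top_iff'.mpr fun p => p.induction_on' (fun _ _ => Submodule.add_mem _)
    fun n a => ?_
  rw [← smul_eq_C_mul]
  exact Submodule.smul_mem _ a (Submodule.subset_span ⟨n, rfl⟩)

theorem linearMap_ext {M : Type*} [AddCommMonoid M] [Module R M] {f g : R[T;T⁻¹] →ₗ[R] M}
    (h : ∀ n : ℤ, f (T n) = g (T n)) : f = g :=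
  LinearMap.ext_on_range span_range_T h

end CommSemiring

theorem eq_of_lie_mulLeft_T_one_eq {R : Type*} [CommRing R] {D E : Module.End R R[T;T⁻¹]}
    (hT : ⁅D, LinearMap.mulLeft R (T 1 : R[T;T⁻¹])⁆ =
      ⁅E, LinearMap.mulLeft R (T 1 : R[T;T⁻¹])⁆)
    (h1 : D 1 = E 1) : D = E := by
  rw [← sub_eq_zero]
  set N := D - E
  have hN1 : N 1 = 0 := by simp [N, h1]
  have hcomm (x : R[T;T⁻¹]) : N (T 1 * x) = T 1 * N x := by
    have := LinearMap.congr_fun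
      (show ⁅N, LinearMap.mulLeft R (T 1 : R[T;T⁻¹])⁆ = 0 by rw [sub_lie, hT, sub_self]) x
    rwa [Ring.lie_def, LinearMap.sub_apply, LinearMap.zero_apply, sub_eq_zero] at this
  refine linearMap_ext fun a => ?_
  induction a using Int.induction_on with
  | zero => rwa [T_zero]
  | succ i ih =>
    rw [add_comm, T_add, hcomm, ih, LinearMap.zero_apply, mul_zero, LinearMap.zero_apply]
  | pred i ih =>
    refine (isUnit_T 1).mul_right_eq_zero.mp ?_
    rw [← hcomm, ← T_add, show 1 + (-(i : ℤ) - 1) = -i by ring, ih, LinearMap.zero_apply]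

end LaurentPolynomial

namespace Polynomial

theorem natDegree_taylor_sub_le {R : Type*} [CommRing R] (f : R[X]) (r : R) {n : ℕ}
    (h : f.natDegree ≤ n + 1) : (taylor r f - f).natDegree ≤ n := by
  rcases eq_or_ne f 0 with rfl | hf
  · simp
  have hlt : (taylor r f - f).degree < (n + 1 : ℕ) :=
    (degree_sub_lt_left (degree_taylor f r) ((taylor_eq_zero r f).not.mpr hf)
      (leadingCoeff_taylor r f)).trans_le
      ((degree_taylor f r).trans_le (natDegree_le_iff_degree_le.mp h))
  exact natDegree_le_iff_degree_le.mpr (Order.le_of_lt_succ hlt)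

theorem taylor_one_X_pow_succ_sub {k : Type*} [Field k] (n : ℕ) :
    taylor (1 : k) (X ^ (n + 1)) - X ^ (n + 1) =
      ∑ m ∈ Finset.range n, (n + 1).choose m • X ^ m + (n + 1 : k) • X ^ n := by
  rw [taylor_X_pow, map_one, add_pow, Finset.sum_range_succ, Finset.sum_range_succ]
  simp [nsmul_eq_mul, mul_comm, Polynomial.smul_eq_C_mul]

/-- By the binomial formula, `H ↦ H(X + 1) - H` sends `X ^ (n + 1)` to `(n + 1) X ^ n` plus lower
terms, so in characteristic zero every monomial is reached by induction on `n`. -/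
theorem exists_taylor_one_sub_eq {k : Type*} [Field k] [CharZero k] (F : k[X]) :
    ∃ H : k[X], taylor 1 H - H = F := by
  let Δ : k[X] →ₗ[k] k[X] := taylor 1 - LinearMap.id
  have hX : ∀ n, (X : k[X]) ^ n ∈ LinearMap.range Δ := by
    intro n
    induction n using Nat.strong_induction_on with
    | _ n ih =>
      have hlead : (n + 1 : k) • (X : k[X]) ^ n ∈ LinearMap.range Δ := by
        rw [← add_sub_cancel_left (∑ m ∈ Finset.range n, (n + 1).choose m • (X : k[X]) ^ m)
          ((n + 1 : k) • X ^ n), ← taylor_one_X_pow_succ_sub]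
        exact sub_mem (LinearMap.mem_range_self Δ _) (Submodule.sum_mem _ fun m hm =>
          nsmul_mem (ih m (Finset.mem_range.mp hm)) _)
      exact (Submodule.smul_mem_iff _ (Nat.cast_add_one_ne_zero n)).mp hlead
  have hΔ : LinearMap.range Δ = ⊤ :=
    Submodule.eq_top_iff'.mpr fun F => F.induction_on' (fun _ _ => add_mem) fun n c => by
      rw [← smul_X_eq_monomial]
      exact Submodule.smul_mem _ c (hX n)
  exact LinearMap.range_eq_top.mp hΔ F

end Polynomial

section Phi

variable {k : Type*} [Field k]

theorem Phi_apply_T (f : k[X]) (d a : ℤ) : Phi k f d (T a) = f.eval (a : k) • T (d + a) := by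
  show (Finsupp.lsum k fun b : ℤ => LinearMap.toSpanSingleton k k[T;T⁻¹]
    (f.eval (b : k) • T (d + b))) (Finsupp.single a 1) = _
  rw [Finsupp.lsum_single, LinearMap.toSpanSingleton_apply, one_smul]

theorem Phi_one_zero : Phi k 1 0 = LinearMap.id :=
  linearMap_ext fun a => by simp [Phi_apply_T]

theorem Phi_add (f g : k[X]) (d : ℤ) : Phi k (f + g) d = Phi k f d + Phi k g d :=
  linearMap_ext fun a => by simp [Phi_apply_T, add_smul]

theorem Phi_smul (c : k) (f : k[X]) (d : ℤ) : Phi k (c • f) d = c • Phi k f d :=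
  linearMap_ext fun a => by simp [Phi_apply_T, smul_smul]

theorem Phi_comp_Phi (f g : k[X]) (d e : ℤ) :
    Phi k f d ∘ₗ Phi k g e = Phi k (f.comp (X + Polynomial.C (e : k)) * g) (d + e) :=
  linearMap_ext fun a => by
    simp only [LinearMap.comp_apply, Phi_apply_T, map_smul, smul_smul, eval_mul, eval_comp,
      eval_add, eval_X, eval_C, Int.cast_add, add_comm (a : k), add_assoc, mul_comm]

theorem Phi_C (c : k) (d : ℤ) : Phi k (Polynomial.C c) d = LinearMap.mulLeft k (c • T d) :=
  linearMap_ext fun a => by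
    rw [Phi_apply_T, eval_C, LinearMap.mulLeft_apply, smul_mul_assoc, ← T_add]

theorem lie_Phi_mulLeft_T (f : k[X]) (d b : ℤ) :
    ⁅Phi k f d, LinearMap.mulLeft k (T b)⁆ = Phi k (taylor (b : k) f - f) (d + b) :=
  linearMap_ext fun a => by
    rw [Ring.lie_def, LinearMap.sub_apply, Module.End.mul_apply, Module.End.mul_apply,
      LinearMap.mulLeft_apply, LinearMap.mulLeft_apply, ← T_add, Phi_apply_T, Phi_apply_T,
      Phi_apply_T, eval_sub, taylor_eval, sub_smul, mul_smul_comm, ← T_add]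
    push_cast
    rw [add_comm (a : k), add_left_comm b, add_assoc]

theorem isDiffOp_Phi : ∀ {n : ℕ} {f : k[X]}, f.natDegree ≤ n → ∀ d : ℤ,
    IsDiffOp k k[T;T⁻¹] n (Phi k f d)
  | 0, f, h, d => by
    obtain ⟨c, rfl⟩ : ∃ c, f = Polynomial.C c := ⟨_, eq_C_of_natDegree_le_zero h⟩
    exact ⟨c • T d, fun x => by rw [Phi_C]; rfl⟩
  | n + 1, f, h, d => IsDiffOp.succ_of_span_eq_top span_range_T <| by
    rintro _ ⟨b, rfl⟩
    rw [lie_Phi_mulLeft_T]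
    exact isDiffOp_Phi (natDegree_taylor_sub_le f _ h) _

end Phi

section CrossedProduct

variable (k : Type*) [Field k]

/-- `Φ` on the crossed product `k[x] # ℤ`, whose underlying `k`-module is `ℤ →₀ k[X]`: the
summand of degree `d` is `k[x] # t^d`. -/
noncomputable def crossedProductToEnd : (ℤ →₀ k[X]) →ₗ[k] Module.End k k[T;T⁻¹] :=
  Finsupp.lsum k fun d =>
    { toFun := fun f => Phi k f d
      map_add' := fun f g => Phi_add f g d
      map_smul' := fun c f => Phi_smul c f d }

variable {k}

theorem crossedProductToEnd_single (d : ℤ) (f : k[X]) :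
    crossedProductToEnd k (Finsupp.single d f) = Phi k f d :=
  Finsupp.lsum_single ..

theorem crossedProductToEnd_sum_single (s : Finset ℤ) (F : ℤ → k[X]) :
    crossedProductToEnd k (∑ d ∈ s, Finsupp.single d (F d)) = ∑ d ∈ s, Phi k (F d) d := by
  simp only [map_sum, crossedProductToEnd_single]

theorem mem_range_crossedProductToEnd_iff {D : Module.End k k[T;T⁻¹]} :
    D ∈ LinearMap.range (crossedProductToEnd k) ↔
      ∃ (s : Finset ℤ) (F : ℤ → k[X]), D = ∑ d ∈ s, Phi k (F d) d := by
  constructor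
  · rintro ⟨F, rfl⟩
    refine ⟨F.support, F, ?_⟩
    conv_lhs => rw [← F.sum_single]
    exact crossedProductToEnd_sum_single F.support F
  · rintro ⟨s, F, rfl⟩
    exact ⟨_, crossedProductToEnd_sum_single s F⟩

theorem coeff_crossedProductToEnd_apply_T (F : ℤ →₀ k[X]) (d a : ℤ) :
    (crossedProductToEnd k F (T a)).coeff (d + a) = (F d).eval (a : k) := by
  induction F using Finsupp.induction_linear with
  | zero => simp
  | add F G hF hG => simp [hF, hG]
  | single e f =>
    rw [crossedProductToEnd_single, Phi_apply_T, AddMonoidAlgebra.coeff_smul, Finsupp.smul_apply,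
      T_apply, Finsupp.single_apply]
    by_cases hed : e = d <;> simp [hed]

theorem crossedProductToEnd_injective [CharZero k] :
    Function.Injective (crossedProductToEnd k) := by
  refine (injective_iff_map_eq_zero _).mpr fun F hF => Finsupp.ext fun d => ?_
  refine eq_zero_of_infinite_isRoot _
    ((Set.infinite_range_of_injective Int.cast_injective).mono ?_)
  rintro _ ⟨a, rfl⟩
  simpa [hF] using (coeff_crossedProductToEnd_apply_T F d a).symm

theorem exists_isDiffOp_crossedProductToEnd (F : ℤ →₀ k[X]) :
    ∃ n, IsDiffOp k k[T;T⁻¹] n (crossedProductToEnd k F) := by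
  induction F using Finsupp.induction_linear with
  | zero => exact ⟨0, by simpa using IsDiffOp.zero 0⟩
  | add F G hF hG =>
    obtain ⟨⟨m, hm⟩, ⟨n, hn⟩⟩ := And.intro hF hG
    exact ⟨max m n, by rw [map_add]; exact (hm.mono le_sup_left).add (hn.mono le_sup_right)⟩
  | single d f =>
    exact ⟨f.natDegree, by rw [crossedProductToEnd_single]; exact isDiffOp_Phi le_rfl d⟩

theorem mulLeft_mem_range_crossedProductToEnd (u : k[T;T⁻¹]) :
    LinearMap.mulLeft k u ∈ LinearMap.range (crossedProductToEnd k) := by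
  induction u using LaurentPolynomial.induction_on' with
  | add p q hp hq =>
    rw [show LinearMap.mulLeft k (p + q) = LinearMap.mulLeft k p + LinearMap.mulLeft k q from
      map_add (LinearMap.mul k _) p q]
    exact add_mem hp hq
  | C_mul_T n c =>
    exact ⟨Finsupp.single n (Polynomial.C c), by rw [crossedProductToEnd_single, Phi_C,
      LaurentPolynomial.smul_eq_C_mul]⟩

theorem exists_lie_mulLeft_T_one_eq [CharZero k] (F : ℤ →₀ k[X]) :
    ∃ G, ⁅crossedProductToEnd k G, LinearMap.mulLeft k (T 1)⁆ = crossedProductToEnd k F := by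
  induction F using Finsupp.induction_linear with
  | zero => exact ⟨0, by rw [map_zero, zero_lie]⟩
  | add F₁ F₂ hF₁ hF₂ =>
    obtain ⟨⟨G₁, h₁⟩, ⟨G₂, h₂⟩⟩ := And.intro hF₁ hF₂
    exact ⟨G₁ + G₂, by rw [map_add, add_lie, h₁, h₂, map_add]⟩
  | single d f =>
    obtain ⟨H, hH⟩ := exists_taylor_one_sub_eq f
    refine ⟨Finsupp.single (d - 1) H, ?_⟩
    rw [crossedProductToEnd_single, crossedProductToEnd_single, lie_Phi_mulLeft_T, Int.cast_one,
      hH, sub_add_cancel]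

theorem mem_range_crossedProductToEnd_of_isDiffOp [CharZero k] :
    ∀ {n : ℕ} {D : Module.End k k[T;T⁻¹]}, IsDiffOp k k[T;T⁻¹] n D →
      D ∈ LinearMap.range (crossedProductToEnd k)
  | 0, D, ⟨u, hu⟩ => (LinearMap.ext hu : D = LinearMap.mulLeft k u) ▸
      mulLeft_mem_range_crossedProductToEnd u
  | n + 1, D, hD => by
    obtain ⟨F, hF⟩ := mem_range_crossedProductToEnd_of_isDiffOp (IsDiffOp.succ_iff.mp hD (T 1))
    obtain ⟨G, hG⟩ := exists_lie_mulLeft_T_one_eq F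
    let E := crossedProductToEnd k G + LinearMap.mulLeft k (D 1 - crossedProductToEnd k G 1)
    have hDE : D = E := eq_of_lie_mulLeft_T_one_eq
      (by rw [add_lie, lie_mulLeft_mulLeft, add_zero, hG, hF]) (by simp [E])
    exact hDE ▸ add_mem (LinearMap.mem_range_self _ G) (mulLeft_mem_range_crossedProductToEnd _)

end CrossedProduct

/-- `Φ : k[x] # ℤ → 𝒟_K` is an isomorphism of `ℤ`-graded `k`-algebras. -/
theorem crossed_product_iso_diffOps (k : Type*) [Field k] [CharZero k] :
    -- Φ lands in the ring of differential operators
    (∀ (f : Polynomial k) (d : ℤ), ∃ n : ℕ, IsDiffOp k (LaurentPolynomial k) n (Phi k f d)) ∧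
    -- Φ is graded: the image of k[x] # t^d maps t^a into k·t^{d+a}
    (∀ (f : Polynomial k) (d a : ℤ), ∃ c : k,
      Phi k f d (LaurentPolynomial.T a) = c • LaurentPolynomial.T (d + a)) ∧
    -- Φ is unital and k-linear in each graded component
    (Phi k 1 0 = LinearMap.id) ∧
    (∀ (f g : Polynomial k) (d : ℤ), Phi k (f + g) d = Phi k f d + Phi k g d) ∧
    (∀ (c : k) (f : Polynomial k) (d : ℤ), Phi k (c • f) d = c • Phi k f d) ∧
    -- Φ is multiplicative: (f # t^d)(g # t^e) = σ^e(f)·g # t^{d+e}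
    (∀ (f g : Polynomial k) (d e : ℤ),
      (Phi k f d) ∘ₗ (Phi k g e) =
        Phi k ((f.comp (Polynomial.X + Polynomial.C (e : k))) * g) (d + e)) ∧
    -- Φ is injective componentwise
    (∀ (s : Finset ℤ) (F : ℤ → Polynomial k),
      (∑ d ∈ s, Phi k (F d) d) = 0 → ∀ d ∈ s, F d = 0) ∧
    -- Φ is surjective onto the differential operators
    (∀ D : LaurentPolynomial k →ₗ[k] LaurentPolynomial k,
      (∃ n : ℕ, IsDiffOp k (LaurentPolynomial k) n D) ↔
        ∃ (s : Finset ℤ) (F : ℤ → Polynomial k), D = ∑ d ∈ s, Phi k (F d) d) := by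
  refine ⟨fun f d => ⟨_, isDiffOp_Phi le_rfl d⟩, fun f d a => ⟨_, Phi_apply_T f d a⟩,
    Phi_one_zero, Phi_add, Phi_smul, Phi_comp_Phi, fun s F h d hd => ?_, fun D => ?_⟩
  · have hF := crossedProductToEnd_injective
      (show crossedProductToEnd k (∑ e ∈ s, Finsupp.single e (F e)) = crossedProductToEnd k 0 by
        rw [crossedProductToEnd_sum_single, h, map_zero])
    simpa [Finsupp.single_apply, hd] using DFunLike.congr_fun hF d
  · rw [← mem_range_crossedProductToEnd_iff]
    exact ⟨fun ⟨_, hD⟩ => mem_range_crossedProductToEnd_of_isDiffOp hD,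
      fun ⟨F, hF⟩ => hF ▸ exists_isDiffOp_crossedProductToEnd F⟩
end

section
/- Let 𝒜, ℬ be numerical semigroups, d ∈ ℤ, and f a polynomial over a field k of characteristic 0 vanishing on Z_d(ℬ,𝒜). Then there exist b₁,…,b_n ∈ ℬ such that (1) d + b_i ∈ 𝒜 and f(b_i) ≠ 0 for all i, (2) b_i ∈ Z_{−b_j}(ℬ,𝒜) for i ≠ j, and (3) f lies in the ideal I_{−b₁}(ℬ,𝒜) + … + I_{−b_n}(ℬ,𝒜). -/
/-!
Take for the `bᵢ` the minimal elements of `C = {i ∈ ℬ | f(i) ≠ 0}` for the order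
`m ≼ i ↔ i - m ∈ 𝒜`. As `𝒜` is cofinite, all of them lie below `m₀ + N` for any one of them `m₀`
and a bound `N` on the gaps of `𝒜`, so there are finitely many. They satisfy (1) because `f`
vanishes on `Z_d(ℬ,𝒜)`, and they form an antichain, which is (2). Every element of `C` lies above
some `bᵢ`, so `f` vanishes on `⋂ᵢ Z_{-bᵢ}(ℬ,𝒜)`; for finitely many finite sets of points the
vanishing ideal of the intersection is the sum of the vanishing ideals (products of `X - a` over
disjoint sets are coprime), which gives (3). When `f ≠ 0` the family is nonempty since `ℬ` is
infinite; this matters because the empty intersection is all of `k`.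
-/

open Polynomial

namespace Polynomial

variable {k : Type*} [Field k]

theorem isCoprime_nodal_of_disjoint {s t : Finset k} (h : Disjoint s t) :
    IsCoprime (Lagrange.nodal s id) (Lagrange.nodal t id) := by
  simp only [Lagrange.nodal_eq]
  exact IsCoprime.prod_left fun a ha => IsCoprime.prod_right fun b hb =>
    isCoprime_X_sub_C_of_isUnit_sub (sub_ne_zero_of_ne (h.forall_ne_finset ha hb)).isUnit

theorem exists_add_eq_of_eval_eq_zero_on_inter {S T : Set k} (hS : S.Finite) (hT : T.Finite)
    {f : k[X]} (hf : ∀ c ∈ S ∩ T, f.eval c = 0) :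
    ∃ g h : k[X], (∀ c ∈ S, g.eval c = 0) ∧ (∀ c ∈ T, h.eval c = 0) ∧ f = g + h := by
  classical
  obtain ⟨u, v, huv⟩ := isCoprime_nodal_of_disjoint
    (disjoint_sdiff_sdiff : Disjoint (hS.toFinset \ hT.toFinset) (hT.toFinset \ hS.toFinset))
  refine ⟨u * Lagrange.nodal (hS.toFinset \ hT.toFinset) id * f,
    v * Lagrange.nodal (hT.toFinset \ hS.toFinset) id * f, fun c hc => ?_, fun c hc => ?_, ?_⟩
  · by_cases hcT : c ∈ T
    · simp [hf c ⟨hc, hcT⟩]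
    · simp [Lagrange.eval_nodal, Finset.prod_eq_zero_iff, sub_eq_zero, hc, hcT]
  · by_cases hcS : c ∈ S
    · simp [hf c ⟨hcS, hc⟩]
    · simp [Lagrange.eval_nodal, Finset.prod_eq_zero_iff, sub_eq_zero, hc, hcS]
  · linear_combination (-f) * huv

theorem exists_add_sum_eq_of_eval_eq_zero {ι : Type*} {T : Set k} (hT : T.Finite)
    {S : ι → Set k} (hS : ∀ i, (S i).Finite) (s : Finset ι) {f : k[X]}
    (hf : ∀ c ∈ T, (∀ i ∈ s, c ∈ S i) → f.eval c = 0) :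
    ∃ (g₀ : k[X]) (g : ι → k[X]), (∀ c ∈ T, g₀.eval c = 0) ∧
      (∀ i ∈ s, ∀ c ∈ S i, (g i).eval c = 0) ∧ f = g₀ + ∑ i ∈ s, g i := by
  classical
  induction s using Finset.induction_on generalizing T f with
  | empty => exact ⟨f, 0, fun c hc => hf c hc (by simp), by simp, by simp⟩
  | insert j s hj ih =>
    obtain ⟨h₀, g, hh₀, hg, rfl⟩ := ih (hT.inter_of_left (S j)) fun c hc hcs =>
      hf c hc.1 (Finset.forall_mem_insert _ _ _ |>.2 ⟨hc.2, hcs⟩)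
    obtain ⟨g₀, gj, hg₀, hgj, rfl⟩ := exists_add_eq_of_eval_eq_zero_on_inter hT (hS j) hh₀
    refine ⟨g₀, Function.update g j gj, hg₀, ?_, ?_⟩
    · refine (Finset.forall_mem_insert _ _ _).2 ⟨by simpa using hgj, fun i hi => ?_⟩
      simpa [ne_of_mem_of_not_mem hi hj] using hg i hi
    · rw [Finset.sum_insert hj, Function.update_self, Finset.sum_update_of_notMem hj]
      ring

theorem exists_eq_sum_of_eval_eq_zero_on_iInter {ι : Type*} [Fintype ι] [Nonempty ι]
    {S : ι → Set k} (hS : ∀ i, (S i).Finite) {f : k[X]} (hf : ∀ c ∈ ⋂ i, S i, f.eval c = 0) :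
    ∃ g : ι → k[X], (∀ i, ∀ c ∈ S i, (g i).eval c = 0) ∧ f = ∑ i, g i := by
  classical
  obtain ⟨i₀⟩ := ‹Nonempty ι›
  obtain ⟨g₀, g, hg₀, hg, hfg⟩ := exists_add_sum_eq_of_eval_eq_zero (hS i₀) hS Finset.univ
    fun c _ hc => hf c (Set.mem_iInter.2 fun i => hc i (Finset.mem_univ i))
  refine ⟨g + Pi.single i₀ g₀, fun i c hc => ?_, ?_⟩
  · rcases eq_or_ne i i₀ with rfl | hi
    · simp [hg i (Finset.mem_univ i) c hc, hg₀ c hc]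
    · simp [hi, hg i (Finset.mem_univ i) c hc]
  · simp [hfg, Finset.sum_add_distrib, add_comm]

end Polynomial

theorem IsNumericalSemigroup.exists_forall_le_mem {A : AddSubmonoid ℕ}
    (hA : IsNumericalSemigroup A) : ∃ N, ∀ x, N ≤ x → x ∈ A := by
  obtain ⟨N, hN⟩ := hA.bddAbove
  exact ⟨N + 1, fun x hx => by_contra fun hxA => by have := hN hxA; omega⟩

theorem IsNumericalSemigroup.exists_mem_eval_ne_zero {R : Type*} [CommRing R] [IsDomain R]
    [CharZero R] {B : AddSubmonoid ℕ} (hB : IsNumericalSemigroup B) {f : R[X]} (hf : f ≠ 0) :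
    ∃ i ∈ B, f.eval (i : R) ≠ 0 := by
  by_contra! h
  have hBinf : (B : Set ℕ).Infinite := compl_compl (B : Set ℕ) ▸ hB.infinite_compl
  refine hf (eq_zero_of_infinite_isRoot f ((hBinf.image Nat.cast_injective.injOn).mono ?_))
  rintro _ ⟨i, hi, rfl⟩
  exact h i hi

theorem mem_Zset_neg_iff {A B : AddSubmonoid ℕ} {m c : ℕ} :
    c ∈ Zset (-(m : ℤ)) B A ↔ c ∈ B ∧ ¬ ∃ a ∈ A, m + a = c := by
  refine and_congr_right fun _ => not_congr <| exists_congr fun a => and_congr_right fun _ => ?_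
  omega

theorem IsNumericalSemigroup.Zset_neg_finite {A : AddSubmonoid ℕ} (hA : IsNumericalSemigroup A)
    (B : AddSubmonoid ℕ) (m : ℕ) : (Zset (-(m : ℤ)) B A).Finite := by
  obtain ⟨N, hN⟩ := hA.exists_forall_le_mem
  refine (Set.finite_lt_nat (m + N)).subset fun c hc => ?_
  change c < m + N
  by_contra! hle
  exact (mem_Zset_neg_iff.1 hc).2 ⟨c - m, hN _ (by omega), by omega⟩

/-- The minimal elements of `C` for the order `m ≼ i ↔ i - m ∈ A`. -/
def minimalsWrt (A : AddSubmonoid ℕ) (C : Set ℕ) : Set ℕ :=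
  {m | m ∈ C ∧ ∀ m' ∈ C, (∃ a ∈ A, m' + a = m) → m' = m}

theorem exists_mem_minimalsWrt_add_eq {A : AddSubmonoid ℕ} {C : Set ℕ} {i : ℕ} (hi : i ∈ C) :
    ∃ m ∈ minimalsWrt A C, ∃ a ∈ A, m + a = i := by
  induction i using Nat.strong_induction_on with
  | _ i ih =>
    by_cases hmin : i ∈ minimalsWrt A C
    · exact ⟨i, hmin, 0, A.zero_mem, rfl⟩
    obtain ⟨m', hm', a, ha, rfl, hne⟩ : ∃ m' ∈ C, ∃ a ∈ A, m' + a = i ∧ m' ≠ i := by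
      simpa [minimalsWrt, hi] using hmin
    obtain ⟨m, hm, a', ha', rfl⟩ := ih m' (by omega) hm'
    exact ⟨m, hm, a' + a, A.add_mem ha' ha, by omega⟩

theorem IsNumericalSemigroup.minimalsWrt_finite {A : AddSubmonoid ℕ} (hA : IsNumericalSemigroup A)
    (C : Set ℕ) : (minimalsWrt A C).Finite := by
  obtain ⟨N, hN⟩ := hA.exists_forall_le_mem
  rcases (minimalsWrt A C).eq_empty_or_nonempty with h | ⟨m₀, hm₀⟩
  · simp [h]
  refine (Set.finite_le_nat (m₀ + N)).subset fun m hm => ?_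
  change m ≤ m₀ + N
  by_contra! hle
  have := hm.2 m₀ hm₀.1 ⟨m - m₀, hN _ (by omega), by omega⟩
  omega

theorem mem_Zset_neg_of_mem_minimalsWrt {A B : AddSubmonoid ℕ} {C : Set ℕ} (hCB : C ⊆ B)
    {m m' : ℕ} (hm : m ∈ minimalsWrt A C) (hm' : m' ∈ minimalsWrt A C) (hne : m ≠ m') :
    m ∈ Zset (-(m' : ℤ)) B A :=
  mem_Zset_neg_iff.2 ⟨hCB hm.1, fun h => hne (hm.2 m' hm'.1 h).symm⟩

theorem poly_local_projectivity_decomposition (k : Type*) [Field k] [CharZero k]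
    (A B : AddSubmonoid ℕ)
    (hA : IsNumericalSemigroup A) (hB : IsNumericalSemigroup B)
    (d : ℤ) (f : Polynomial k)
    (hf : ∀ b ∈ Zset d B A, f.eval (b : k) = 0) :
    ∃ (n : ℕ) (b : Fin n → ℕ),
      (∀ i, b i ∈ B) ∧
      (∀ i, (∃ a ∈ A, (b i : ℤ) + d = (a : ℤ)) ∧ f.eval (b i : k) ≠ 0) ∧
      (∀ i j, i ≠ j → b i ∈ Zset (-(b j : ℤ)) B A) ∧
      (∃ g : Fin n → Polynomial k,
        (∀ i, ∀ c ∈ Zset (-(b i : ℤ)) B A, (g i).eval (c : k) = 0) ∧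
        f = ∑ i, g i) := by
  obtain rfl | hf0 := eq_or_ne f 0
  · exact ⟨0, Fin.elim0, nofun, nofun, nofun, Fin.elim0, nofun, by simp⟩
  set C : Set ℕ := {i | i ∈ B ∧ f.eval (i : k) ≠ 0}
  have hM := hA.minimalsWrt_finite C
  set b := hM.toFinset.orderEmbOfFin rfl
  have hbM : ∀ i, b i ∈ minimalsWrt A C := fun i =>
    hM.mem_toFinset.1 (hM.toFinset.orderEmbOfFin_mem rfl i)
  have hcover : ∀ c ∈ C, ∃ i, ∃ a ∈ A, b i + a = c := fun c hc => by
    obtain ⟨m, hm, hmc⟩ := exists_mem_minimalsWrt_add_eq hc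
    obtain ⟨i, rfl⟩ : m ∈ Set.range b := by simpa [b] using hm
    exact ⟨i, hmc⟩
  obtain ⟨c₀, hc₀⟩ := hB.exists_mem_eval_ne_zero hf0
  obtain ⟨i₀, -⟩ := hcover c₀ hc₀
  have : Nonempty (Fin _) := ⟨i₀⟩
  have hvanish : ∀ c ∈ ⋂ i, Zset (-(b i : ℤ)) B A, f.eval (c : k) = 0 := fun c hc => by
    by_contra hfc
    obtain ⟨i, a, ha, rfl⟩ := hcover c ⟨(Set.mem_iInter.1 hc i₀).1, hfc⟩
    exact (mem_Zset_neg_iff.1 (Set.mem_iInter.1 hc i)).2 ⟨a, ha, rfl⟩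
  obtain ⟨g, hg, hfg⟩ := exists_eq_sum_of_eval_eq_zero_on_iInter
    (S := fun i => Nat.cast '' Zset (-(b i : ℤ)) B A) (fun i => (hA.Zset_neg_finite B _).image _)
    (f := f) (by
      rw [← Nat.cast_injective.injOn.image_iInter_eq]
      rintro _ ⟨c, hc, rfl⟩
      exact hvanish c hc)
  refine ⟨_, b, fun i => (hbM i).1.1, fun i => ⟨?_, (hbM i).1.2⟩, fun i j hij =>
    mem_Zset_neg_of_mem_minimalsWrt (fun _ h => h.1) (hbM i) (hbM j) (b.injective.ne hij),
    g, fun i c hc => hg i _ (Set.mem_image_of_mem _ hc), hfg⟩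
  by_contra h
  exact (hbM i).1.2 (hf _ ⟨(hbM i).1.1, h⟩)
end

section
/- For the numerical semigroup 𝒜 = 2ℕ + 3ℕ and every a ∈ 𝒜 with a > 0, the normalized polynomial ℓ̄_{−a}(x) := ℓ_{−a}(x)/ℓ_{−a}(a), where ℓ_{−a}(x) = ∏_{b ∈ Z_{−a}(𝒜)}(x − b), takes integer values on all integers. -/
open Polynomial

/-- The Apéry set `Z₋ₐ(𝒜) = {i ∈ 𝒜 | i − a ∉ 𝒜}` of `a` in `𝒜 = 2ℕ + 3ℕ = ℕ \ {1}`,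
as a finset (all its elements are `≤ a + 1`). -/
noncomputable def aperyFinset (a : ℕ) : Finset ℕ :=
  open Classical in
  (Finset.range (a + 2)).filter
    (fun i => i ≠ 1 ∧ ¬ ∃ c : ℕ, c ≠ 1 ∧ (i : ℤ) - (a : ℤ) = (c : ℤ))

/-- `ℓ₋ₐ(x) = ∏_{b ∈ Z₋ₐ(𝒜)} (x − b)`. -/
noncomputable def aperyPoly (a : ℕ) : Polynomial ℚ :=
  ∏ i ∈ aperyFinset a, (X - C (i : ℚ))

/-! For `a ≥ 2` the Apéry set is `{0, 2, …, a − 1, a + 1}`, so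
`ℓ₋ₐ(n) = (n − a − 1) · n · (n − 2)(n − 3)⋯(n − a + 1)` and `ℓ₋ₐ(a) = −a · (a − 2)!`.
Writing `n − a − 1 = (n − 1) − a` splits `ℓ₋ₐ(n)` into the product `n(n − 1)⋯(n − a + 1)` of
`a` consecutive integers, divisible by `a! = a (a − 1) (a − 2)!`, minus `a · n` times a product
of `a − 2` consecutive integers, divisible by `a · (a − 2)!`. -/

open scoped Nat

theorem factorial_dvd_descPochhammer_eval (n : ℤ) (k : ℕ) :
    (k ! : ℤ) ∣ (descPochhammer ℤ k).eval n :=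
  ⟨Ring.choose n k, by
    rw [eval_eq_smeval, Ring.descPochhammer_eq_factorial_smul_choose, nsmul_eq_mul]⟩

theorem descPochhammer_eval_add_two {R : Type*} [CommRing R] (r : R) (k : ℕ) :
    (descPochhammer R (k + 2)).eval r = r * (r - 1) * (descPochhammer R k).eval (r - 2) := by
  simp only [descPochhammer_succ_left, eval_mul, eval_comp, eval_X, eval_sub, eval_one]
  rw [sub_sub, one_add_one_eq_two, mul_assoc]

theorem aperyFinset_add_two (b : ℕ) :
    aperyFinset (b + 2) =
      insert (b + 3) (insert 0 ((Finset.range b).map (addRightEmbedding 2))) := by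
  ext i
  simp only [aperyFinset, Finset.mem_filter, Finset.mem_range, Finset.mem_insert, Finset.mem_map,
    addRightEmbedding_apply]
  constructor
  · rintro ⟨hi, hi1, hapery⟩
    by_cases hlt : i < b + 2
    · rcases Nat.eq_zero_or_pos i with rfl | hi0
      · exact Or.inr (Or.inl rfl)
      · exact Or.inr (Or.inr ⟨i - 2, by omega, by omega⟩)
    · exact Or.inl (by_contra fun h => hapery ⟨i - (b + 2), by omega, by omega⟩)
  · rintro (rfl | rfl | ⟨j, hj, rfl⟩) <;> refine ⟨by omega, by omega, ?_⟩ <;>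
      rintro ⟨c, hc, hceq⟩ <;> omega

theorem aperyPoly_add_two_eval (b : ℕ) (x : ℚ) :
    (aperyPoly (b + 2)).eval x = (x - (b + 3)) * x * (descPochhammer ℚ b).eval (x - 2) := by
  rw [aperyPoly, aperyFinset_add_two, Finset.prod_insert (by simp), Finset.prod_insert (by simp),
    Finset.prod_map, descPochhammer_eval_eq_prod_range]
  simp only [eval_mul, eval_prod, eval_sub, eval_X, eval_C, addRightEmbedding_apply]
  push_cast
  simp only [sub_zero, sub_add_eq_sub_sub_swap]
  ring

theorem aperyPoly_add_two_eval_self (b : ℕ) :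
    (aperyPoly (b + 2)).eval ((b + 2 : ℕ) : ℚ) = -((b + 2) * b ! : ℤ) := by
  have hfact : (descPochhammer ℚ b).eval (b : ℚ) = b ! := by
    rw [descPochhammer_eval_eq_descFactorial, Nat.descFactorial_self]
  rw [aperyPoly_add_two_eval]
  push_cast
  rw [add_sub_cancel_right, hfact]
  ring

theorem add_two_mul_factorial_dvd (b : ℕ) (n : ℤ) :
    ((b + 2) * b ! : ℤ) ∣ (n - (b + 3)) * n * (descPochhammer ℤ b).eval (n - 2) := by
  have hconsec : ((b + 2) * b ! : ℤ) ∣ n * (n - 1) * (descPochhammer ℤ b).eval (n - 2) := by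
    rw [← descPochhammer_eval_add_two]
    refine dvd_trans ⟨b + 1, ?_⟩ (factorial_dvd_descPochhammer_eval n (b + 2))
    push_cast [Nat.factorial_succ]
    ring
  have hshift : ((b + 2) * b ! : ℤ) ∣ (b + 2) * n * (descPochhammer ℤ b).eval (n - 2) := by
    rw [mul_assoc]
    exact mul_dvd_mul_left _ (dvd_mul_of_dvd_right (factorial_dvd_descPochhammer_eval _ b) n)
  have hsplit : (n - (b + 3)) * n * (descPochhammer ℤ b).eval (n - 2) =
      n * (n - 1) * (descPochhammer ℤ b).eval (n - 2) -
        (b + 2) * n * (descPochhammer ℤ b).eval (n - 2) := by ring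
  exact hsplit ▸ dvd_sub hconsec hshift

/-- The normalised polynomial `ℓ̄₋ₐ = ℓ₋ₐ / ℓ₋ₐ(a)` is integer-valued. -/
theorem aperyPoly_integer_valued (a : ℕ) (ha : a ≠ 1) (hpos : 0 < a) :
    (aperyPoly a).eval (a : ℚ) ≠ 0 ∧
      ∀ n : ℤ, ∃ m : ℤ,
        (aperyPoly a).eval (n : ℚ) = (m : ℚ) * (aperyPoly a).eval (a : ℚ) := by
  obtain ⟨b, rfl⟩ : ∃ b, a = b + 2 := ⟨a - 2, by omega⟩
  rw [aperyPoly_add_two_eval_self]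
  refine ⟨neg_ne_zero.mpr (by positivity), fun n => ?_⟩
  obtain ⟨m, hm⟩ := add_two_mul_factorial_dvd b n
  refine ⟨-m, ?_⟩
  have hmℚ := congrArg (Int.cast : ℤ → ℚ) hm
  push_cast at hmℚ
  rw [aperyPoly_add_two_eval]
  push_cast
  linear_combination hmℚ
end
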